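/- Let D be an n×n nonnegative real demand matrix, let δ > 0 and s ≥ 1, and consider any schedule of D over s parallel switches with reconfiguration delay δ that covers D. Suppose some row or some column of D has exactly s nonzero entries, whose values listed in non-increasing order are x₁ ≥ x₂ ≥ ⋯ ≥ x_s > 0, with total weight w = x₁ + ⋯ + x_s, and with the convention x_j = 0 for j > s. Then the makespan of the schedule is at least δ + min( x₁, max(x₂, (w + δ)/s, x_s + δ), min_{2 ≤ m ≤ s²} max(x_{m+1}, (w + m·δ)/s) ), where the minimum over an empty index range (which occurs only when s = 1) is taken to be +∞. -/

import Mathlib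

/-!
Fix the row (transposing every permutation turns a column into a row) and let `m` be the number
of configurations servicing its `s` nonzero entries. Each entry needs one, so `m ≥ s`, and adding
up all loads gives `δ m + w ≤ s · makespan`. An entry serviced by a single configuration puts
`δ` plus that entry on one switch; if `m ≤ s + k`, at most `k` entries are serviced twice, so one
of the `k + 1` largest is serviced once and the makespan is at least `δ + x_{k+1}`. If
`m = s + 1`, some switch carries two of the configurations and some entry is serviced only on
that switch, which therefore has load at least `2δ + x_s`. The cases `m = s`, `m = s + 1` and
`m ≥ s + 2` (with `m - s` capped at `s²`) give the three terms of the minimum.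
-/

open Finset

/-- A configuration of an optical switch: a permutation of the `n` ports
together with a (time) weight. -/
abbrev Config (n : ℕ) := Equiv.Perm (Fin n) × ℝ

/-- A schedule over `s` parallel switches assigns to each switch a finite
list of configurations. -/
abbrev Schedule (n s : ℕ) := Fin s → List (Config n)

/-- All configuration weights of the schedule are positive. -/
def ValidWeights {n s : ℕ} (S : Schedule n s) : Prop :=
  ∀ h : Fin s, ∀ c ∈ S h, 0 < c.2

/-- Total weight of all configurations (over all switches) servicing entry `(i, j)`,
i.e. whose permutation maps `i` to `j`. -/
def servedWeight {n s : ℕ} (S : Schedule n s) (i j : Fin n) : ℝ :=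
  ∑ h : Fin s, (((S h).filter (fun c => decide (c.1 i = j))).map Prod.snd).sum

/-- The schedule covers the demand matrix `D`. -/
def Covers {n s : ℕ} (D : Matrix (Fin n) (Fin n) ℝ) (S : Schedule n s) : Prop :=
  ∀ i j : Fin n, D i j ≤ servedWeight S i j

/-- The load of switch `h`: each configuration contributes the reconfiguration
delay `δ` plus its weight. -/
def load {n s : ℕ} (δ : ℝ) (S : Schedule n s) (h : Fin s) : ℝ :=
  ((S h).map (fun c => δ + c.2)).sum

/-- The makespan of the schedule: the maximum load over the switches. -/
noncomputable def makespan {n s : ℕ} (δ : ℝ) (S : Schedule n s) : ℝ :=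
  ⨆ h : Fin s, load δ S h


/-- The lower-bound expression `LB⁽²⁾ = δ + min(x₁, max(x₂, (w+δ)/s, x_s+δ),
min_{2 ≤ m ≤ s²} max(x_{m+1}, (w+m·δ)/s))`, valued in `WithTop ℝ` so that the
minimum over an empty index range (which occurs only when `s = 1`) is `+∞`. -/
noncomputable def LB2 (s : ℕ) (δ w : ℝ) (x : ℕ → ℝ) : WithTop ℝ :=
  (δ : WithTop ℝ) +
    min ((x 1 : ℝ) : WithTop ℝ)
      (min ((max (x 2) (max ((w + δ) / (s : ℝ)) (x s + δ)) : ℝ) : WithTop ℝ)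
        ((Finset.Icc 2 (s ^ 2)).inf fun m =>
          ((max (x (m + 1)) ((w + (m : ℝ) * δ) / (s : ℝ)) : ℝ) : WithTop ℝ)))

lemma Finset.exists_pos_eq_of_sum_lt_card_add {α : Type*} {J : Finset α} {f g : α → ℕ}
    (hfg : ∀ j ∈ J, f j ≤ g j) (hg : ∀ j ∈ J, 0 < g j)
    (hlt : ∑ j ∈ J, g j < #J + ∑ j ∈ J, f j) : ∃ j ∈ J, 0 < f j ∧ f j = g j := by
  by_contra! hne
  have hstep : ∀ j ∈ J, 1 + f j ≤ g j := fun j hj => by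
    have := hfg j hj; have := hg j hj; have := hne j hj
    omega
  have := Finset.sum_le_sum hstep
  rw [sum_add_distrib, sum_const, smul_eq_mul, mul_one] at this
  omega

lemma Finset.card_filter_eq_of_map_val_eq {α β γ : Type*} {J : Finset α} {K : Finset β}
    {f : α → γ} {g : β → γ} (h : J.val.map f = K.val.map g) (p : γ → Prop) [DecidablePred p] :
    #(J.filter fun j => p (f j)) = #(K.filter fun k => p (g k)) := by
  simpa [Finset.card_def, Finset.filter_val, Multiset.filter_map] using
    congrArg (fun m => Multiset.card (m.filter p)) h

lemma List.sum_fiberwise_le {α β : Type*} [DecidableEq β] (l : List α) (f : α → β) (g : α → ℝ)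
    (hg : ∀ c ∈ l, 0 ≤ g c) (J : Finset β) :
    ∑ j ∈ J, ((l.filter fun c => f c = j).map g).sum ≤ (l.map g).sum := by
  induction l with
  | nil => simp
  | cons a l ih =>
    simp only [List.filter_cons, apply_ite, List.map_cons, List.sum_cons, decide_eq_true_eq]
    rw [List.forall_mem_cons] at hg
    calc _ = (if f a ∈ J then g a else 0) + ∑ j ∈ J, ((l.filter fun c => f c = j).map g).sum := by
          rw [← Finset.sum_ite_eq J (f a) fun _ => g a, ← Finset.sum_add_distrib]
          refine Finset.sum_congr rfl fun j _ => ?_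
          split_ifs <;> simp
      _ ≤ g a + (l.map g).sum := add_le_add (by split_ifs <;> simp [hg.1]) (ih hg.2)

lemma LB2_le_coe_iff {s : ℕ} {δ w M : ℝ} {x : ℕ → ℝ} :
    LB2 s δ w x ≤ M ↔ x 1 ≤ M - δ ∨ max (x 2) (max ((w + δ) / s) (x s + δ)) ≤ M - δ ∨
      ∃ m ∈ Icc 2 (s ^ 2), max (x (m + 1)) ((w + m * δ) / s) ≤ M - δ := by
  rw [LB2, show (M : WithTop ℝ) = δ + (M - δ : ℝ) by norm_cast; ring_nf,
    WithTop.add_le_add_iff_left WithTop.coe_ne_top, min_le_iff, min_le_iff,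
    Finset.inf_le_iff (WithTop.coe_lt_top _)]
  simp only [WithTop.coe_le_coe]

lemma LB2_le_coe_of_bounds {s m : ℕ} {δ w M : ℝ} {x : ℕ → ℝ} (hs : 1 ≤ s) (hδ : 0 ≤ δ)
    (hδM : δ ≤ M) (hx0 : ∀ j, s < j → x j = 0) (hw : w = ∑ j ∈ range s, x (j + 1))
    (hload : δ * m + w ≤ s * M) (htop : ∀ k, k + 1 ≤ s → m ≤ s + k → δ + x (k + 1) ≤ M)
    (hlast : m = s + 1 → 2 * δ + x s ≤ M) : LB2 s δ w x ≤ M := by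
  have htop' : ∀ k, (k + 1 ≤ s → m ≤ s + k) → x (k + 1) ≤ M - δ := fun k hk => by
    by_cases hks : k + 1 ≤ s
    · linarith [htop k hks (hk hks)]
    · rw [hx0 _ (by omega)]; linarith
  have hs0 : (0 : ℝ) < s := by exact_mod_cast hs
  rw [LB2_le_coe_iff]
  by_cases hm : m ≤ s
  · exact Or.inl (by simpa using htop' 0 fun _ => by omega)
  have hm1 : (s + 1 : ℝ) ≤ m := by exact_mod_cast (show s + 1 ≤ m by omega)
  by_cases hsecond : m = s + 1 ∨ s = 1
  · refine Or.inr (Or.inl (max_le ?_ (max_le ?_ ?_)))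
    · rcases hsecond with hms | rfl
      · exact htop' 1 fun _ => hms.le
      · rw [hx0 2 (by norm_num)]; linarith
    · rw [div_le_iff₀ hs0]
      nlinarith
    · rcases hsecond with hms | rfl
      · linarith [hlast hms]
      · simp only [range_one, sum_singleton, zero_add] at hw
        push_cast at hload hm1
        nlinarith
  · push Not at hsecond
    have hs2 : 4 ≤ s ^ 2 := by nlinarith [show 2 ≤ s by omega]
    have hss : s ≤ s ^ 2 := Nat.le_self_pow two_ne_zero s
    refine Or.inr (Or.inr ⟨min (m - s) (s ^ 2), mem_Icc.2 ⟨by omega, min_le_right _ _⟩,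
      max_le (htop' _ fun _ => by omega) ?_⟩)
    rw [div_le_iff₀ hs0]
    have : (s : ℝ) + (min (m - s) (s ^ 2) : ℕ) ≤ m := by exact_mod_cast (show _ ≤ m by omega)
    nlinarith

def servicing {n s : ℕ} (S : Schedule n s) (h : Fin s) (i j : Fin n) : List (Config n) :=
  (S h).filter fun c => c.1 i = j

def servicingWeight {n s : ℕ} (S : Schedule n s) (h : Fin s) (i j : Fin n) : ℝ :=
  ((servicing S h i j).map Prod.snd).sum

def numServicing {n s : ℕ} (S : Schedule n s) (i j : Fin n) : ℕ :=
  ∑ h, (servicing S h i j).length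

section Servicing

variable {n s : ℕ} {S : Schedule n s} {D : Matrix (Fin n) (Fin n) ℝ} {δ : ℝ}
  {h₀ : Fin s} {i j : Fin n}

lemma servedWeight_eq_sum_servicingWeight (S : Schedule n s) (i j : Fin n) :
    servedWeight S i j = ∑ h, servicingWeight S h i j := rfl

lemma length_servicing_le_numServicing (S : Schedule n s) (h : Fin s) (i j : Fin n) :
    (servicing S h i j).length ≤ numServicing S i j :=
  single_le_sum (f := fun h => (servicing S h i j).length) (fun _ _ => Nat.zero_le _) (mem_univ h)

lemma servicingWeight_nonneg (hval : ValidWeights S) (h : Fin s) (i j : Fin n) :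
    0 ≤ servicingWeight S h i j :=
  List.sum_nonneg fun _ hc => by
    obtain ⟨c, hc', rfl⟩ := List.mem_map.1 hc
    exact (hval h c (List.mem_of_mem_filter hc')).le

lemma load_le_makespan (δ : ℝ) (S : Schedule n s) (h : Fin s) : load δ S h ≤ makespan δ S :=
  le_ciSup (Set.finite_range _).bddAbove h

lemma sum_servicing_le_load (hval : ValidWeights S) (hδ : 0 ≤ δ) (h : Fin s) (i : Fin n)
    (J : Finset (Fin n)) :
    ∑ j ∈ J, (δ * (servicing S h i j).length + servicingWeight S h i j) ≤ load δ S h := by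
  have hsplit : ∀ j, δ * (servicing S h i j).length + servicingWeight S h i j =
      ((servicing S h i j).map fun c => δ + c.2).sum := fun j => by
    simp [servicingWeight, List.sum_map_add, mul_comm]
  rw [sum_congr rfl fun j _ => hsplit j]
  exact List.sum_fiberwise_le (S h) (fun c => c.1 i) (fun c => δ + c.2)
    (fun c hc => by linarith [hval h c hc]) J

lemma numServicing_pos (hcov : Covers D S) (hD : 0 < D i j) : 0 < numServicing S i j := by
  by_contra! h0
  have hserved : servedWeight S i j = 0 := by
    rw [servedWeight_eq_sum_servicingWeight]
    refine Finset.sum_eq_zero fun h _ => ?_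
    have : servicing S h i j = [] := List.eq_nil_of_length_eq_zero
      (Finset.sum_eq_zero_iff.1 (Nat.le_zero.1 h0) h (mem_univ h))
    simp [servicingWeight, this]
  linarith [hcov i j]

lemma le_servicingWeight_of_length_eq (hcov : Covers D S)
    (heq : (servicing S h₀ i j).length = numServicing S i j) :
    D i j ≤ servicingWeight S h₀ i j := by
  have hrest : ∑ h ∈ univ.erase h₀, (servicing S h i j).length = 0 := by
    have := Finset.add_sum_erase univ (fun h => (servicing S h i j).length) (mem_univ h₀)
    rw [numServicing] at heq
    omega
  have hserved : servedWeight S i j = servicingWeight S h₀ i j := by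
    rw [servedWeight_eq_sum_servicingWeight]
    refine Finset.sum_eq_single h₀ (fun h _ hne => ?_) (absurd (mem_univ h₀))
    have := Finset.sum_eq_zero_iff.1 hrest h (mem_erase.2 ⟨hne, mem_univ h⟩)
    simp [servicingWeight, List.eq_nil_of_length_eq_zero this]
  exact hserved ▸ hcov i j

lemma mul_sum_length_add_le_makespan (hval : ValidWeights S) (hδ : 0 ≤ δ) (hcov : Covers D S)
    {J : Finset (Fin n)} (hj : j ∈ J) (heq : (servicing S h₀ i j).length = numServicing S i j) :
    δ * ∑ j' ∈ J, ((servicing S h₀ i j').length : ℝ) + D i j ≤ makespan δ S :=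
  calc δ * ∑ j' ∈ J, ((servicing S h₀ i j').length : ℝ) + D i j
      ≤ δ * ∑ j' ∈ J, ((servicing S h₀ i j').length : ℝ) + ∑ j' ∈ J, servicingWeight S h₀ i j' :=
        add_le_add le_rfl ((le_servicingWeight_of_length_eq hcov heq).trans
          (single_le_sum (fun j' _ => servicingWeight_nonneg hval h₀ i j') hj))
    _ = ∑ j' ∈ J, (δ * (servicing S h₀ i j').length + servicingWeight S h₀ i j') := by
        rw [sum_add_distrib, mul_sum]
    _ ≤ load δ S h₀ := sum_servicing_le_load hval hδ h₀ i J
    _ ≤ makespan δ S := load_le_makespan δ S h₀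

lemma add_le_makespan_of_numServicing_eq_one (hval : ValidWeights S) (hδ : 0 ≤ δ)
    (hcov : Covers D S) (h1 : numServicing S i j = 1) : δ + D i j ≤ makespan δ S := by
  obtain ⟨h₀, -, hne⟩ := Finset.exists_ne_zero_of_sum_ne_zero (h1.trans_ne one_ne_zero)
  have heq : (servicing S h₀ i j).length = 1 := by
    have := length_servicing_le_numServicing S h₀ i j
    omega
  simpa [heq] using
    mul_sum_length_add_le_makespan hval hδ hcov (mem_singleton_self j) (heq.trans h1.symm)

lemma mul_sum_numServicing_add_le (hval : ValidWeights S) (hδ : 0 ≤ δ) (hcov : Covers D S)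
    (i : Fin n) (J : Finset (Fin n)) :
    δ * ∑ j ∈ J, (numServicing S i j : ℝ) + ∑ j ∈ J, D i j ≤ s * makespan δ S :=
  calc δ * ∑ j ∈ J, (numServicing S i j : ℝ) + ∑ j ∈ J, D i j
      ≤ ∑ j ∈ J, ∑ h, (δ * (servicing S h i j).length + servicingWeight S h i j) := by
        rw [mul_sum, ← sum_add_distrib]
        refine sum_le_sum fun j _ => ?_
        rw [sum_add_distrib, ← mul_sum, ← servedWeight_eq_sum_servicingWeight, numServicing]
        push_cast
        linarith [hcov i j]
    _ = ∑ h, ∑ j ∈ J, (δ * (servicing S h i j).length + servicingWeight S h i j) := sum_comm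
    _ ≤ ∑ h : Fin s, makespan δ S :=
        sum_le_sum fun h _ => (sum_servicing_le_load hval hδ h i J).trans (load_le_makespan δ S h)
    _ = s * makespan δ S := by simp

lemma exists_two_mul_add_le_makespan (hval : ValidWeights S) (hδ : 0 ≤ δ) (hcov : Covers D S)
    {J : Finset (Fin n)} (hJ : #J = s) (hnum : ∀ j ∈ J, 0 < numServicing S i j)
    (hm : ∑ j ∈ J, numServicing S i j = s + 1) : ∃ j ∈ J, 2 * δ + D i j ≤ makespan δ S := by
  obtain ⟨h₀, -, hh₀⟩ : ∃ h₀ ∈ univ, 1 < ∑ j ∈ J, (servicing S h₀ i j).length := by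
    refine exists_lt_of_sum_lt ?_
    rw [sum_comm]
    change _ < ∑ j ∈ J, numServicing S i j
    simp [hm]
  obtain ⟨j, hj, -, heq⟩ := Finset.exists_pos_eq_of_sum_lt_card_add (g := numServicing S i)
    (fun j _ => length_servicing_le_numServicing S h₀ i j) hnum (by omega)
  refine ⟨j, hj, ?_⟩
  have h2 : (2 : ℝ) ≤ ∑ j' ∈ J, ((servicing S h₀ i j').length : ℝ) := by exact_mod_cast hh₀
  nlinarith [mul_sum_length_add_le_makespan hval hδ hcov hj heq]

lemma add_le_makespan_of_sum_numServicing_le (hval : ValidWeights S) (hδ : 0 ≤ δ)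
    (hcov : Covers D S) {J : Finset (Fin n)} {a : ℝ} {k : ℕ}
    (hnum : ∀ j ∈ J, 0 < numServicing S i j) (hm : ∑ j ∈ J, numServicing S i j ≤ #J + k)
    (hbig : k < #{j ∈ J | a ≤ D i j}) : δ + a ≤ makespan δ S := by
  rw [card_filter] at hbig
  obtain ⟨j, hj, hpos, heq⟩ := Finset.exists_pos_eq_of_sum_lt_card_add
    (f := fun j => if a ≤ D i j then 1 else 0) (g := numServicing S i)
    (fun j hj => by have := hnum j hj; split_ifs <;> omega) hnum (by omega)
  have ha : a ≤ D i j := by by_contra h; simp [h] at hpos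
  simp only [ha, if_true] at heq
  linarith [add_le_makespan_of_numServicing_eq_one hval hδ hcov heq.symm]

end Servicing

def Schedule.transpose {n s : ℕ} (S : Schedule n s) : Schedule n s :=
  fun h => (S h).map fun c => (c.1.symm, c.2)

section Transpose
variable {n s : ℕ} {S : Schedule n s}

lemma makespan_transpose (δ : ℝ) (S : Schedule n s) : makespan δ S.transpose = makespan δ S := by
  simp [makespan, load, Schedule.transpose, Function.comp_def]

lemma ValidWeights.transpose (hval : ValidWeights S) : ValidWeights S.transpose := by
  intro h c hc
  obtain ⟨c', hc', rfl⟩ := List.mem_map.1 hc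
  exact hval h c' hc'

lemma servedWeight_transpose (S : Schedule n s) (i j : Fin n) :
    servedWeight S.transpose i j = servedWeight S j i := by
  simp [servedWeight, Schedule.transpose, List.filter_map, Function.comp_def, Equiv.symm_apply_eq,
    eq_comm (a := i)]

lemma Covers.transpose {D : Matrix (Fin n) (Fin n) ℝ} (hcov : Covers D S) :
    Covers D.transpose S.transpose :=
  fun i j => (servedWeight_transpose S i j).symm ▸ hcov j i

end Transpose

theorem LB2_le_makespan_of_row {n s : ℕ} (hs : 1 ≤ s) {D : Matrix (Fin n) (Fin n) ℝ} {δ : ℝ}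
    (hδ : 0 ≤ δ) {S : Schedule n s} (hval : ValidWeights S) (hcov : Covers D S) {x : ℕ → ℝ}
    (hxpos : ∀ j, 1 ≤ j → j ≤ s → 0 < x j)
    (hxanti : ∀ j₁ j₂, 1 ≤ j₁ → j₁ ≤ j₂ → j₂ ≤ s → x j₂ ≤ x j₁)
    (hx0 : ∀ j, s < j → x j = 0) {w : ℝ} (hw : w = ∑ j ∈ range s, x (j + 1)) {i : Fin n}
    (hrow : ((univ.filter fun j => D i j ≠ 0).val.map fun j => D i j) =
      (Multiset.range s).map fun l => x (l + 1)) :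
    LB2 s δ w x ≤ makespan δ S := by
  set J := univ.filter fun j => D i j ≠ 0
  set m := ∑ j ∈ J, numServicing S i j
  rw [← range_val] at hrow
  have hmem : ∀ j ∈ J, ∃ l < s, x (l + 1) = D i j := fun j hj => by
    simpa [hrow] using Multiset.mem_map_of_mem (fun j => D i j) (show j ∈ J.val from hj)
  have hJ : #J = s := by simpa using congrArg Multiset.card hrow
  have hsum : ∑ j ∈ J, D i j = w := by rw [hw, ← sum_map_val, hrow, sum_map_val]
  have hnum : ∀ j ∈ J, 0 < numServicing S i j := fun j hj => by
    obtain ⟨l, hl, hx⟩ := hmem j hj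
    exact numServicing_pos hcov (hx ▸ hxpos _ (by omega) (by omega))
  have hload : δ * m + w ≤ s * makespan δ S := by
    simpa [m, hsum] using mul_sum_numServicing_add_le hval hδ hcov i J
  have hsm : (s : ℝ) ≤ m := by
    have : s ≤ m := hJ ▸ (card_eq_sum_ones J).trans_le (sum_le_sum hnum)
    exact_mod_cast this
  have hw0 : 0 ≤ w := hw ▸ sum_nonneg fun l hl => (hxpos _ (by omega) (by simp at hl; omega)).le
  have hδM : δ ≤ makespan δ S := by
    have hs0 : (0 : ℝ) < s := by exact_mod_cast hs
    nlinarith [mul_le_mul_of_nonneg_left hsm hδ]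
  refine LB2_le_coe_of_bounds hs hδ hδM hx0 hw hload (fun k hk hmk => ?_) (fun hm => ?_)
  · refine add_le_makespan_of_sum_numServicing_le hval hδ hcov hnum (hJ ▸ hmk) ?_
    rw [card_filter_eq_of_map_val_eq hrow (x (k + 1) ≤ ·)]
    calc k < #(range (k + 1)) := by simp
      _ ≤ _ := card_le_card fun l hl => by
        simp only [mem_range, mem_filter] at hl ⊢
        exact ⟨by omega, hxanti _ _ (by omega) (by omega) hk⟩
  · obtain ⟨j, hj, hle⟩ := exists_two_mul_add_le_makespan hval hδ hcov hJ hnum hm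
    obtain ⟨l, hl, hx⟩ := hmem j hj
    linarith [hxanti (l + 1) s (by omega) (by omega) le_rfl]

theorem lower_bound_two_general {n s : ℕ} (hs : 1 ≤ s)
    (D : Matrix (Fin n) (Fin n) ℝ)
    (δ : ℝ) (hδ : 0 < δ)
    (S : Schedule n s) (hval : ValidWeights S) (hcov : Covers D S)
    (x : ℕ → ℝ)
    (hxpos : ∀ j, 1 ≤ j → j ≤ s → 0 < x j)
    (hxanti : ∀ j₁ j₂, 1 ≤ j₁ → j₁ ≤ j₂ → j₂ ≤ s → x j₂ ≤ x j₁)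
    (hx0 : ∀ j, s < j → x j = 0)
    (w : ℝ) (hw : w = ∑ j ∈ Finset.range s, x (j + 1))
    (hrc :
      (∃ i, ((univ.filter fun j => D i j ≠ 0).val.map fun j => D i j)
          = (Multiset.range s).map fun l => x (l + 1)) ∨
      (∃ j, ((univ.filter fun i => D i j ≠ 0).val.map fun i => D i j)
          = (Multiset.range s).map fun l => x (l + 1))) :
    LB2 s δ w x ≤ ((makespan δ S : ℝ) : WithTop ℝ) := by
  rcases hrc with ⟨i, hrow⟩ | ⟨j, hcol⟩
  · exact LB2_le_makespan_of_row hs hδ.le hval hcov hxpos hxanti hx0 hw hrow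
  · rw [← makespan_transpose]
    exact LB2_le_makespan_of_row hs hδ.le hval.transpose hcov.transpose hxpos hxanti hx0 hw
      (D := D.transpose) hcol

/-- **Lower bound 2.** If some row or some column of `D` has exactly `s`
nonzero entries, whose values in non-increasing order are
`x 1 ≥ x 2 ≥ ⋯ ≥ x s > 0` with total weight `w` (and `x j = 0` for `j > s`),
then the makespan of any covering schedule over `s` parallel switches with
reconfiguration delay `δ > 0` is at least `LB2 s δ w x`. -/
theorem lower_bound_two {n s : ℕ} (hs : 1 ≤ s)
    (D : Matrix (Fin n) (Fin n) ℝ) (hD : ∀ i j, 0 ≤ D i j)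
    (δ : ℝ) (hδ : 0 < δ)
    (S : Schedule n s) (hval : ValidWeights S) (hcov : Covers D S)
    (x : ℕ → ℝ)
    (hxpos : ∀ j, 1 ≤ j → j ≤ s → 0 < x j)
    (hxanti : ∀ j₁ j₂, 1 ≤ j₁ → j₁ ≤ j₂ → j₂ ≤ s → x j₂ ≤ x j₁)
    (hx0 : ∀ j, s < j → x j = 0)
    (w : ℝ) (hw : w = ∑ j ∈ Finset.range s, x (j + 1))
    (hrc :
      (∃ i, ((univ.filter fun j => D i j ≠ 0).val.map fun j => D i j)
          = (Multiset.range s).map fun l => x (l + 1)) ∨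
      (∃ j, ((univ.filter fun i => D i j ≠ 0).val.map fun i => D i j)
          = (Multiset.range s).map fun l => x (l + 1))) :
    LB2 s δ w x ≤ ((makespan δ S : ℝ) : WithTop ℝ) :=
  lower_bound_two_general hs D δ hδ S hval hcov x hxpos hxanti hx0 w hw hrc
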